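/- Let G = (A, B, E) be a bipartite graph with |A| = n, let S be a semi-matching of G admitting no length-2 degree-minimizing path, and let S* be an optimal semi-matching of G. Then the maximal degree of S is at most ⌈log₂(n+1)⌉ times the maximal degree of S*. -/

import Mathlib

open Finset

variable {α β : Type*} [Fintype α] [Fintype β] [DecidableEq α] [DecidableEq β]

/-- Degree of a vertex `b ∈ B` with respect to an edge set `S`. -/
def degB (S : Finset (α × β)) (b : β) : ℕ := (S.filter fun e => e.2 = b).card

/-- Degree of a vertex `a ∈ A` with respect to an edge set `S`. -/
def degA (S : Finset (α × β)) (a : α) : ℕ := (S.filter fun e => e.1 = a).card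

/-- Maximal degree of a vertex with respect to an edge set `S`. -/
def maxDeg (S : Finset (α × β)) : ℕ :=
  max (Finset.univ.sup (degA S)) (Finset.univ.sup (degB S))

/-- `S` is a semi-matching of `A'` into `B` using edges of `E`. -/
def IsSemi (A' : Finset α) (E S : Finset (α × β)) : Prop :=
  S ⊆ E ∧ (∀ e ∈ S, e.1 ∈ A') ∧ ∀ a ∈ A', degA S a = 1

/-- An optimal semi-matching of `A'` into `B` using edges of `E`:
a semi-matching minimizing the maximal degree. -/
def IsOptSemi (A' : Finset α) (E S : Finset (α × β)) : Prop :=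
  IsSemi A' E S ∧ ∀ T, IsSemi A' E T → maxDeg S ≤ maxDeg T

/-- Neighborhood of a set `X ⊆ A` of vertices with respect to an edge set `E`. -/
def nbr (E : Finset (α × β)) (X : Finset α) : Finset β :=
  Finset.univ.filter fun b => ∃ a ∈ X, (a, b) ∈ E

/-- A degree-minimizing path `(b 0, a 0, b 1, a 1, …, b k)` with respect to a
semi-matching `S` in the graph with edge set `E`: each `a i` is matched to `b i` in `S`,
each `(a i, b (i+1))` is a non-matching edge of `E`, the `S`-degrees of the `b i` are
non-increasing along the path, and the total degree drop is at least `2`. -/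
def IsDegMinPath (E S : Finset (α × β)) {k : ℕ} (a : Fin k → α) (b : Fin (k + 1) → β) :
    Prop :=
  0 < k ∧ Function.Injective a ∧ Function.Injective b ∧
  (∀ i : Fin k, (a i, b i.castSucc) ∈ S) ∧
  (∀ i : Fin k, (a i, b i.succ) ∈ E ∧ (a i, b i.succ) ∉ S) ∧
  (∀ i : Fin k, degB S (b i.succ) ≤ degB S (b i.castSucc)) ∧
  degB S (b (Fin.last k)) + 2 ≤ degB S (b 0)

/-- `S` admits no degree-minimizing path (of any length) in `E`. -/
def NoDegMinPath (E S : Finset (α × β)) : Prop :=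
  ∀ (k : ℕ) (a : Fin k → α) (b : Fin (k + 1) → β), ¬ IsDegMinPath E S a b

/-- `S` admits no length-2 degree-minimizing path `(b', a, b)` in `E`, i.e. there is no
`a` matched in `S` to `b'` with a non-matching edge `(a, b) ∈ E` and
`deg_S(b') > deg_S(b) + 1`. -/
def NoLen2DegMinPath (E S : Finset (α × β)) : Prop :=
  ¬ ∃ (a : α) (b b' : β), (a, b') ∈ S ∧ (a, b) ∈ E ∧ (a, b) ∉ S ∧
      degB S b + 1 < degB S b'

/-!
Let `d*` be the maximal degree of `S*` and `V_j` the set of vertices of `B` of `S`-degree at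
least `j`. A vertex `a` matched by `S` into `V_{j+1}` is matched by `S*` into `V_j`, for otherwise
`S` would have a length-2 degree-minimizing path through `a`. The at least `(j+1)|V_{j+1}|` such
vertices `a` are thus covered by at most `d*|V_j|` edges of `S*`, so `|V_{j+1}| ≤ |V_j| / 2` once
`j + 1 ≥ 2d*`. A vertex of `S`-degree `2d* + t` then gives `2^t ≤ |V_{2d*}|`, while
`2d*|V_{2d*}| ≤ n`; hence `2^(t+1) ≤ n`, i.e. `t + 2 ≤ ⌈log₂(n+1)⌉`, and
`2d* + ⌈log₂(n+1)⌉ - 2 ≤ ⌈log₂(n+1)⌉ d*`.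
-/

def heavyVerts (S : Finset (α × β)) (j : ℕ) : Finset β := {b | j ≤ degB S b}

def heavyEdges (S : Finset (α × β)) (j : ℕ) : Finset (α × β) := {e ∈ S | j ≤ degB S e.2}

section

variable {γ δ : Type*}

lemma card_filter_fst_mem [DecidableEq γ] {S : Finset (γ × δ)} (hS : ∀ a, degA S a = 1)
    (X : Finset γ) : #{e ∈ S | e.1 ∈ X} = #X := by
  rw [card_eq_sum_card_fiberwise (s := {e ∈ S | e.1 ∈ X}) (f := Prod.fst) (t := X)
    fun e he => (mem_filter.1 he).2]
  refine (sum_congr rfl fun a ha => ?_).trans (card_eq_sum_ones X).symm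
  rw [filter_filter, ← hS a, degA]
  congr 1
  exact filter_congr fun e _ => ⟨And.right, fun h => ⟨h ▸ ha, h⟩⟩

lemma snd_eq_of_mem [DecidableEq γ] {S : Finset (γ × δ)} {a : γ} {b b' : δ}
    (ha : degA S a ≤ 1) (h : (a, b) ∈ S) (h' : (a, b') ∈ S) : b = b' :=
  congrArg Prod.snd <| card_le_one.1 ha _ (mem_filter.2 ⟨h, rfl⟩) _ (mem_filter.2 ⟨h', rfl⟩)

lemma degB_le_degB_add_one [DecidableEq γ] [DecidableEq δ] {E S : Finset (γ × δ)}
    (hno : NoLen2DegMinPath E S) {a : γ} {b b' : δ} (ha : degA S a ≤ 1) (hab' : (a, b') ∈ S)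
    (hab : (a, b) ∈ E) : degB S b' ≤ degB S b + 1 := by
  by_cases habS : (a, b) ∈ S
  · rw [snd_eq_of_mem ha habS hab']
    exact Nat.le_succ _
  · by_contra! h
    exact hno ⟨a, b, b', hab', hab, habS, h⟩

lemma mul_card_heavyVerts_le [Fintype δ] [DecidableEq δ] (S : Finset (γ × δ)) (j : ℕ) :
    j * #(heavyVerts S j) ≤ #(heavyEdges S j) := by
  refine mul_card_image_le_card_of_maps_to (f := Prod.snd)
    (fun e he => mem_filter.2 ⟨mem_univ _, (mem_filter.1 he).2⟩) j fun b hb => ?_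
  refine (mem_filter.1 hb).2.trans (card_le_card fun e he => ?_)
  obtain ⟨heS, rfl⟩ := mem_filter.1 he
  exact mem_filter.2 ⟨mem_filter.2 ⟨heS, (mem_filter.1 hb).2⟩, rfl⟩

end

section

variable {E S T : Finset (α × β)}

lemma degA_le_maxDeg (S : Finset (α × β)) (a : α) : degA S a ≤ maxDeg S :=
  (le_sup (mem_univ a)).trans (le_max_left _ _)

lemma degB_le_maxDeg (S : Finset (α × β)) (b : β) : degB S b ≤ maxDeg S :=
  (le_sup (mem_univ b)).trans (le_max_right _ _)

lemma maxDeg_le {k : ℕ} (hA : ∀ a, degA S a ≤ k) (hB : ∀ b, degB S b ≤ k) :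
    maxDeg S ≤ k :=
  max_le (Finset.sup_le fun a _ => hA a) (Finset.sup_le fun b _ => hB b)

/-- The edges of `T` at the vertices `a` whose `S`-partner lies in `heavyVerts S (j + 1)` are as
many as these vertices and all end in `heavyVerts S j`. -/
lemma card_heavyEdges_succ_le (hS : ∀ a, degA S a = 1) (hno : NoLen2DegMinPath E S)
    (hT : IsSemi univ E T) (j : ℕ) :
    #(heavyEdges S (j + 1)) ≤ maxDeg T * #(heavyVerts S j) := by
  obtain ⟨hTE, -, hTdeg⟩ := hT
  set X : Finset α := {a | ∃ b, (a, b) ∈ S ∧ j + 1 ≤ degB S b}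
  calc #(heavyEdges S (j + 1)) ≤ #{e ∈ S | e.1 ∈ X} :=
        card_le_card fun e he => by
          obtain ⟨heS, hdeg⟩ := mem_filter.1 he
          exact mem_filter.2 ⟨heS, mem_filter.2 ⟨mem_univ _, e.2, heS, hdeg⟩⟩
    _ = #{e ∈ T | e.1 ∈ X} := by
        rw [card_filter_fst_mem hS, card_filter_fst_mem fun a => hTdeg a (mem_univ a)]
    _ ≤ maxDeg T * #(heavyVerts S j) := by
        refine card_le_mul_card_image_of_maps_to (f := Prod.snd) (fun e he => ?_) _
          fun b _ => (card_le_card fun e he => ?_).trans (degB_le_maxDeg T b)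
        · obtain ⟨heT, hX⟩ := mem_filter.1 he
          obtain ⟨b', hab', hdeg⟩ := (mem_filter.1 hX).2
          have := degB_le_degB_add_one hno (hS e.1).le hab' (hTE heT)
          exact mem_filter.2 ⟨mem_univ _, by omega⟩
        · exact mem_filter.2 ⟨(mem_filter.1 (mem_filter.1 he).1).1, (mem_filter.1 he).2⟩

lemma two_mul_card_heavyVerts_succ_le (hS : ∀ a, degA S a = 1) (hno : NoLen2DegMinPath E S)
    (hT : IsSemi univ E T) (hD : 0 < maxDeg T) {j : ℕ} (hj : 2 * maxDeg T ≤ j + 1) :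
    2 * #(heavyVerts S (j + 1)) ≤ #(heavyVerts S j) := by
  refine Nat.le_of_mul_le_mul_left ?_ hD
  calc maxDeg T * (2 * #(heavyVerts S (j + 1))) = 2 * maxDeg T * #(heavyVerts S (j + 1)) := by
        ring
    _ ≤ (j + 1) * #(heavyVerts S (j + 1)) := Nat.mul_le_mul_right _ hj
    _ ≤ #(heavyEdges S (j + 1)) := mul_card_heavyVerts_le S (j + 1)
    _ ≤ maxDeg T * #(heavyVerts S j) := card_heavyEdges_succ_le hS hno hT j

lemma two_pow_mul_card_heavyVerts_add_le (hS : ∀ a, degA S a = 1) (hno : NoLen2DegMinPath E S)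
    (hT : IsSemi univ E T) (hD : 0 < maxDeg T) {j : ℕ} (hj : 2 * maxDeg T ≤ j + 1) (t : ℕ) :
    2 ^ t * #(heavyVerts S (j + t)) ≤ #(heavyVerts S j) := by
  induction t with
  | zero => simp
  | succ t ih =>
    calc 2 ^ (t + 1) * #(heavyVerts S (j + (t + 1)))
        = 2 ^ t * (2 * #(heavyVerts S (j + t + 1))) := by ring_nf
      _ ≤ 2 ^ t * #(heavyVerts S (j + t)) :=
          Nat.mul_le_mul_left _ (two_mul_card_heavyVerts_succ_le hS hno hT hD (by omega))
      _ ≤ #(heavyVerts S j) := ih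

lemma degB_add_two_le_of_two_mul_maxDeg_le (hS : ∀ a, degA S a = 1) (hno : NoLen2DegMinPath E S)
    (hT : IsSemi univ E T) (hD : 0 < maxDeg T) {b : β} (hb : 2 * maxDeg T ≤ degB S b) :
    degB S b + 2 ≤ 2 * maxDeg T + Nat.clog 2 (Fintype.card α + 1) := by
  obtain ⟨t, ht⟩ := Nat.exists_eq_add_of_le hb
  have hheavy : 1 ≤ #(heavyVerts S (2 * maxDeg T + t)) :=
    one_le_card.2 ⟨b, mem_filter.2 ⟨mem_univ b, ht.ge⟩⟩
  have hpow : 2 ^ (t + 1) ≤ Fintype.card α :=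
    calc 2 ^ (t + 1) = 2 * (2 ^ t * 1) := by ring
      _ ≤ 2 * maxDeg T * (2 ^ t * #(heavyVerts S (2 * maxDeg T + t))) :=
          Nat.mul_le_mul (by omega) (Nat.mul_le_mul_left _ hheavy)
      _ ≤ 2 * maxDeg T * #(heavyVerts S (2 * maxDeg T)) :=
          Nat.mul_le_mul_left _ (two_pow_mul_card_heavyVerts_add_le hS hno hT hD (by omega) t)
      _ ≤ #(heavyEdges S (2 * maxDeg T)) := mul_card_heavyVerts_le S _
      _ ≤ #S := card_filter_le _ _
      _ = Fintype.card α := by simpa using card_filter_fst_mem hS univ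
  have := (Nat.lt_clog_iff_pow_lt one_lt_two).2 (Nat.lt_add_one_of_le hpow)
  omega

lemma degB_le_clog_mul_maxDeg (hS : ∀ a, degA S a = 1) (hno : NoLen2DegMinPath E S)
    (hT : IsSemi univ E T) (hD : 0 < maxDeg T) (b : β) :
    degB S b ≤ Nat.clog 2 (Fintype.card α + 1) * maxDeg T := by
  set L := Nat.clog 2 (Fintype.card α + 1)
  have hcard : #S = Fintype.card α := by simpa using card_filter_fst_mem hS univ
  have hbS : degB S b ≤ Fintype.card α := hcard ▸ card_filter_le _ _
  obtain hb0 | hb1 := Nat.eq_zero_or_pos (degB S b)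
  · simp [hb0]
  have hL1 : 0 < L := (Nat.lt_clog_iff_pow_lt one_lt_two).2 (by rw [pow_zero]; omega)
  rcases lt_or_ge (degB S b) 2 with hb | hb2
  · nlinarith
  have hL2 : 1 < L := (Nat.lt_clog_iff_pow_lt one_lt_two).2 (by rw [pow_one]; omega)
  rcases lt_or_ge (degB S b) (2 * maxDeg T) with hlt | hge
  · nlinarith
  · nlinarith [degB_add_two_le_of_two_mul_maxDeg_le hS hno hT hD hge]

end

/-- A semi-matching with no length-2 degree-minimizing path is a `⌈log₂(n+1)⌉`
approximation of an optimal semi-matching, where `n = |A|`. -/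
theorem semi2_log_approximation (E S Sstar : Finset (α × β)) (n : ℕ)
    (hn : n = Fintype.card α)
    (hS : IsSemi Finset.univ E S) (hno : NoLen2DegMinPath E S)
    (hSstar : IsOptSemi Finset.univ E Sstar) :
    maxDeg S ≤ Nat.clog 2 (n + 1) * maxDeg Sstar := by
  subst hn
  have hSdeg : ∀ a, degA S a = 1 := fun a => hS.2.2 a (mem_univ a)
  rcases isEmpty_or_nonempty α with hα | ⟨⟨a₀⟩⟩
  · simp [eq_empty_of_isEmpty S, maxDeg, degB]
  have hD : 0 < maxDeg Sstar :=
    (hSstar.1.2.2 a₀ (mem_univ a₀)).symm.trans_le (degA_le_maxDeg Sstar a₀)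
  have hL : 0 < Nat.clog 2 (Fintype.card α + 1) :=
    Nat.clog_pos one_lt_two (Nat.succ_lt_succ (Fintype.card_pos_iff.2 ⟨a₀⟩))
  exact maxDeg_le (fun a => (hSdeg a).trans_le (Nat.mul_pos hL hD))
    (degB_le_clog_mul_maxDeg hSdeg hno hSstar.1 hD)
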